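/- arXiv:2006.05110 — 3 statements merged into one kernel-verified Lean document; each statement's English description precedes it below -/
import Mathlib

section
/- Let λ be a measure on (0,∞) satisfying ∫ (z ∧ 1) dλ(z) < ∞. Then λ satisfies condition (F6): there exists ε₀ > 0 such that liminf_{a→0⁺} [ exp(ε₀ ∫_{(a,1]} z dλ(z)) · ∫_{(0,a]} z² dλ(z) ] = 0. -/
open MeasureTheory Set Filter

/-- The quantity appearing in condition (F6):
`exp(ε₀ ∫_{(a,1]} z ν(dz)) · ∫_{(0,a]} z² ν(dz)`. -/
noncomputable def F6expr (ν : Measure ℝ) (ε₀ a : ℝ) : ENNReal :=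
  ENNReal.ofReal (Real.exp (ε₀ * (∫⁻ z in Ioc a 1, ENNReal.ofReal z ∂ν).toReal)) *
    ∫⁻ z in Ioc (0 : ℝ) a, ENNReal.ofReal (z ^ 2) ∂ν

/-- Condition (F6) with a given constant `ε₀`. -/
def F6with (ν : Measure ℝ) (ε₀ : ℝ) : Prop :=
  liminf (fun a : ℝ => F6expr ν ε₀ a) (nhdsWithin 0 (Ioi 0)) = 0

/-- Condition (F6). -/
def F6 (ν : Measure ℝ) : Prop := ∃ ε₀ > (0 : ℝ), F6with ν ε₀

open Topology

/-!
Put `ρ(z) = min z 1`. On `(0, 1]` both `z` and `z²` are at most `ρ(z)`, so for `0 < a ≤ 1` the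
exponential factor of (F6) is bounded by `exp(ε₀ ∫_{(0,∞)} ρ dλ)` while the second factor is at
most `∫_{(0,a]} ρ dλ`, which tends to `0` as `a ↓ 0` because `ρ` is `λ`-integrable on `(0, ∞)`.
Hence the expression in (F6) even converges to `0`, for every `ε₀ ≥ 0`.
-/

theorem tendsto_measure_Ioc_nhdsGT {μ : Measure ℝ} {c b : ℝ} (hcb : c < b)
    (hb : μ (Ioc c b) ≠ ⊤) : Tendsto (fun a => μ (Ioc c a)) (𝓝[>] c) (𝓝 0) := by
  have hempty : (⋂ r > c, Ioc c r) = ∅ := by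
    refine eq_empty_of_forall_notMem fun z hz => ?_
    have hcz : c < z := (mem_iInter₂.1 hz b hcb).1
    have hzmid : z ≤ (c + z) / 2 := (mem_iInter₂.1 hz _ (by linarith)).2
    linarith
  have hlim := tendsto_measure_biInter_gt (μ := μ) (s := fun r => Ioc c r)
    (fun _ _ => measurableSet_Ioc.nullMeasurableSet)
    (fun _ _ _ hij => Ioc_subset_Ioc_right hij) ⟨b, hcb, hb⟩
  rwa [hempty, measure_empty] at hlim

theorem tendsto_setLIntegral_Ioc_nhdsGT {ν : Measure ℝ} {f : ℝ → ENNReal} {c b : ℝ}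
    (hcb : c < b) (hf : ∫⁻ z in Ioc c b, f z ∂ν ≠ ⊤) :
    Tendsto (fun a => ∫⁻ z in Ioc c a, f z ∂ν) (𝓝[>] c) (𝓝 0) := by
  simp_rw [← withDensity_apply f measurableSet_Ioc] at hf ⊢
  exact tendsto_measure_Ioc_nhdsGT hcb hf

theorem setLIntegral_Ioc_le_setLIntegral_min_one (ν : Measure ℝ) {a : ℝ} (ha : 0 < a) :
    ∫⁻ z in Ioc a 1, ENNReal.ofReal z ∂ν ≤
      ∫⁻ z in Ioi (0 : ℝ), ENNReal.ofReal (min z 1) ∂ν :=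
  calc ∫⁻ z in Ioc a 1, ENNReal.ofReal z ∂ν
      ≤ ∫⁻ z in Ioc a 1, ENNReal.ofReal (min z 1) ∂ν :=
        setLIntegral_mono' measurableSet_Ioc fun _ hz =>
          ENNReal.ofReal_le_ofReal (le_min le_rfl hz.2)
    _ ≤ ∫⁻ z in Ioi (0 : ℝ), ENNReal.ofReal (min z 1) ∂ν :=
        lintegral_mono_set fun _ hz => ha.trans hz.1

theorem setLIntegral_Ioc_zero_sq_le_min_one (ν : Measure ℝ) {a : ℝ} (ha : a ≤ 1) :
    ∫⁻ z in Ioc (0 : ℝ) a, ENNReal.ofReal (z ^ 2) ∂ν ≤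
      ∫⁻ z in Ioc (0 : ℝ) a, ENNReal.ofReal (min z 1) ∂ν := by
  refine setLIntegral_mono' measurableSet_Ioc fun z hz => ENNReal.ofReal_le_ofReal ?_
  have hz1 : z ≤ 1 := hz.2.trans ha
  exact le_min (by nlinarith [hz.1]) (by nlinarith [hz.1])

theorem F6expr_le {ν : Measure ℝ} {ε₀ a : ℝ}
    (hν : ∫⁻ z in Ioi (0 : ℝ), ENNReal.ofReal (min z 1) ∂ν < ⊤) (hε₀ : 0 ≤ ε₀) (ha : 0 < a)
    (ha1 : a ≤ 1) :
    F6expr ν ε₀ a ≤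
      ENNReal.ofReal (Real.exp (ε₀ * (∫⁻ z in Ioi (0 : ℝ), ENNReal.ofReal (min z 1) ∂ν).toReal)) *
        ∫⁻ z in Ioc (0 : ℝ) a, ENNReal.ofReal (min z 1) ∂ν := by
  unfold F6expr
  gcongr ENNReal.ofReal (Real.exp (ε₀ * ?_)) * ?_
  · exact ENNReal.toReal_mono hν.ne (setLIntegral_Ioc_le_setLIntegral_min_one ν ha)
  · exact setLIntegral_Ioc_zero_sq_le_min_one ν ha1

theorem tendsto_F6expr_nhdsGT_zero {ν : Measure ℝ} {ε₀ : ℝ}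
    (hν : ∫⁻ z in Ioi (0 : ℝ), ENNReal.ofReal (min z 1) ∂ν < ⊤) (hε₀ : 0 ≤ ε₀) :
    Tendsto (F6expr ν ε₀) (𝓝[>] 0) (𝓝 0) := by
  have hsmall : Tendsto (fun a => ∫⁻ z in Ioc (0 : ℝ) a, ENNReal.ofReal (min z 1) ∂ν)
      (𝓝[>] 0) (𝓝 0) :=
    tendsto_setLIntegral_Ioc_nhdsGT one_pos
      (ne_top_of_le_ne_top hν.ne (lintegral_mono_set Ioc_subset_Ioi_self))
  have hbound := ENNReal.Tendsto.const_mul hsmall <| Or.inr <| ENNReal.ofReal_ne_top (r :=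
    Real.exp (ε₀ * (∫⁻ z in Ioi (0 : ℝ), ENNReal.ofReal (min z 1) ∂ν).toReal))
  rw [mul_zero] at hbound
  refine tendsto_of_tendsto_of_tendsto_of_le_of_le' tendsto_const_nhds hbound
    (Eventually.of_forall fun _ => zero_le) ?_
  filter_upwards [Ioc_mem_nhdsGT one_pos] with a ha
  exact F6expr_le hν hε₀ ha.1 ha.2

theorem F6with_of_lintegral_min_one_lt_top {ν : Measure ℝ} {ε₀ : ℝ}
    (hν : ∫⁻ z in Ioi (0 : ℝ), ENNReal.ofReal (min z 1) ∂ν < ⊤) (hε₀ : 0 ≤ ε₀) :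
    F6with ν ε₀ :=
  (tendsto_F6expr_nhdsGT_zero hν hε₀).liminf_eq

theorem stmt_10 (lam : Measure ℝ)
    (hlam : ∫⁻ z in Ioi (0 : ℝ), ENNReal.ofReal (min z 1) ∂lam < ⊤) :
    F6 lam :=
  ⟨1, one_pos, F6with_of_lintegral_min_one_lt_top hlam zero_le_one⟩
end

section
/- Let λ₁, λ₂ be measures on (0,∞) such that λ₁ satisfies condition (F6) and λ₂ satisfies ∫ (z ∧ 1) dλ₂(z) < ∞. Then λ = λ₁ + λ₂ satisfies condition (F6). -/
/-!
Write `I ν a = ∫_{(a,1]} z dν` (`firstMomentAbove`) and `J ν a = ∫_{(0,a]} z² dν`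
(`secondMomentBelow`). For `a ≤ 1`, `λ₂` adds at most `C = ∫ (z ∧ 1) dλ₂` to `I` and at most `a C`
to `J`, so it suffices to find small `a` where both `exp (ε₀ I λ₁ a) J λ₁ a` and
`exp (ε₀ I λ₁ a) a` are small. Given `a` with `exp (ε₀ I λ₁ a) J λ₁ a ≤ η`, pass to
`b = min a (η exp (-ε₀ I λ₁ a))`: since `∫_{(b,a]} z dλ₁ ≤ J λ₁ a / b ≤ 1`, this raises `I λ₁` by at
most `1`, while `exp (ε₀ I λ₁ a) b ≤ η`. Hence `λ₁ + λ₂` satisfies (F6) with the same `ε₀`.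
-/

open MeasureTheory Set Filter

noncomputable def firstMomentAbove (ν : Measure ℝ) (a : ℝ) : ENNReal :=
  ∫⁻ z in Ioc a 1, ENNReal.ofReal z ∂ν

noncomputable def secondMomentBelow (ν : Measure ℝ) (a : ℝ) : ENNReal :=
  ∫⁻ z in Ioc (0 : ℝ) a, ENNReal.ofReal (z ^ 2) ∂ν

noncomputable def momentMinOne (ν : Measure ℝ) : ENNReal :=
  ∫⁻ z in Ioi (0 : ℝ), ENNReal.ofReal (min z 1) ∂ν

lemma F6expr_eq (ν : Measure ℝ) (ε a : ℝ) :
    F6expr ν ε a = ENNReal.ofReal (Real.exp (ε * (firstMomentAbove ν a).toReal)) *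
      secondMomentBelow ν a := rfl

section Moments

variable (ν ν₁ ν₂ : Measure ℝ)

lemma firstMomentAbove_add (a : ℝ) :
    firstMomentAbove (ν₁ + ν₂) a = firstMomentAbove ν₁ a + firstMomentAbove ν₂ a := by
  simp only [firstMomentAbove, Measure.restrict_add, lintegral_add_measure]

lemma secondMomentBelow_add (a : ℝ) :
    secondMomentBelow (ν₁ + ν₂) a = secondMomentBelow ν₁ a + secondMomentBelow ν₂ a := by
  simp only [secondMomentBelow, Measure.restrict_add, lintegral_add_measure]

lemma firstMomentAbove_anti : Antitone (firstMomentAbove ν) := fun _ _ h =>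
  lintegral_mono_set (Ioc_subset_Ioc_left h)

lemma secondMomentBelow_mono : Monotone (secondMomentBelow ν) := fun _ _ h =>
  lintegral_mono_set (Ioc_subset_Ioc_right h)

variable {ν}

lemma firstMomentAbove_le_add_inv_mul {a b : ℝ} (hb : 0 < b) (hba : b ≤ a) (ha : a ≤ 1) :
    firstMomentAbove ν b ≤ firstMomentAbove ν a + (ENNReal.ofReal b)⁻¹ * secondMomentBelow ν a := by
  have hsplit : firstMomentAbove ν b =
      (∫⁻ z in Ioc b a, ENNReal.ofReal z ∂ν) + firstMomentAbove ν a := by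
    rw [firstMomentAbove, ← Ioc_union_Ioc_eq_Ioc hba ha,
      lintegral_union measurableSet_Ioc (Ioc_disjoint_Ioc_of_le le_rfl), firstMomentAbove]
  have hb' : ENNReal.ofReal b ≠ 0 := (ENNReal.ofReal_pos.mpr hb).ne'
  have hpoint :
      ∀ z ∈ Ioc b a, ENNReal.ofReal z ≤ (ENNReal.ofReal b)⁻¹ * ENNReal.ofReal (z ^ 2) := by
    intro z hz
    rw [← ENNReal.mul_le_iff_le_inv hb' ENNReal.ofReal_ne_top, ← ENNReal.ofReal_mul hb.le]
    exact ENNReal.ofReal_le_ofReal (by nlinarith [hz.1])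
  rw [hsplit, add_comm]
  gcongr
  calc ∫⁻ z in Ioc b a, ENNReal.ofReal z ∂ν
      ≤ ∫⁻ z in Ioc b a, (ENNReal.ofReal b)⁻¹ * ENNReal.ofReal (z ^ 2) ∂ν :=
        setLIntegral_mono' measurableSet_Ioc hpoint
    _ = (ENNReal.ofReal b)⁻¹ * ∫⁻ z in Ioc b a, ENNReal.ofReal (z ^ 2) ∂ν :=
        lintegral_const_mul' _ _ (ENNReal.inv_ne_top.mpr hb')
    _ ≤ (ENNReal.ofReal b)⁻¹ * secondMomentBelow ν a := by
        gcongr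
        exact lintegral_mono_set (Ioc_subset_Ioc_left hb.le)

lemma toReal_firstMomentAbove_le {a b : ℝ} (hb : 0 < b) (hba : b ≤ a) (ha : a ≤ 1)
    (hJ : secondMomentBelow ν a ≠ ⊤) :
    (firstMomentAbove ν b).toReal ≤
      (firstMomentAbove ν a).toReal + (secondMomentBelow ν a).toReal / b := by
  by_cases hI : firstMomentAbove ν a = ⊤
  -- then `I ν b = ⊤` too, and its `toReal` is the junk value `0`
  · have hIb : firstMomentAbove ν b = ⊤ := top_le_iff.mp (hI ▸ firstMomentAbove_anti ν hba)
    rw [hIb, ENNReal.toReal_top]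
    positivity
  · have hrhs : (ENNReal.ofReal b)⁻¹ * secondMomentBelow ν a ≠ ⊤ :=
      ENNReal.mul_ne_top (ENNReal.inv_ne_top.mpr (ENNReal.ofReal_pos.mpr hb).ne') hJ
    have h := ENNReal.toReal_mono (ENNReal.add_ne_top.mpr ⟨hI, hrhs⟩)
      (firstMomentAbove_le_add_inv_mul hb hba ha)
    rwa [ENNReal.toReal_add hI hrhs, ENNReal.toReal_mul, ENNReal.toReal_inv,
      ENNReal.toReal_ofReal hb.le, inv_mul_eq_div] at h

lemma firstMomentAbove_le_momentMinOne {a : ℝ} (ha : 0 ≤ a) :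
    firstMomentAbove ν a ≤ momentMinOne ν :=
  calc firstMomentAbove ν a = ∫⁻ z in Ioc a 1, ENNReal.ofReal (min z 1) ∂ν :=
        setLIntegral_congr_fun measurableSet_Ioc fun z hz => by rw [min_eq_left hz.2]
    _ ≤ _ := lintegral_mono_set fun z hz => ha.trans_lt hz.1

lemma secondMomentBelow_le_mul_momentMinOne {a : ℝ} (ha₀ : 0 ≤ a) (ha₁ : a ≤ 1) :
    secondMomentBelow ν a ≤ ENNReal.ofReal a * momentMinOne ν :=
  calc secondMomentBelow ν a
      ≤ ∫⁻ z in Ioc (0 : ℝ) a, ENNReal.ofReal a * ENNReal.ofReal (min z 1) ∂ν := by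
        refine setLIntegral_mono' measurableSet_Ioc fun z hz => ?_
        rw [← ENNReal.ofReal_mul ha₀, min_eq_left (hz.2.trans ha₁), sq]
        exact ENNReal.ofReal_le_ofReal (mul_le_mul_of_nonneg_right hz.2 hz.1.le)
    _ = ENNReal.ofReal a * ∫⁻ z in Ioc (0 : ℝ) a, ENNReal.ofReal (min z 1) ∂ν :=
        lintegral_const_mul' _ _ ENNReal.ofReal_ne_top
    _ ≤ _ := by gcongr; exact lintegral_mono_set Ioc_subset_Ioi_self

end Moments

lemma F6expr_add_le (ν₁ ν₂ : Measure ℝ) {ε b : ℝ} (hε : 0 ≤ ε) (hb₀ : 0 ≤ b) (hb₁ : b ≤ 1)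
    (hC : momentMinOne ν₂ ≠ ⊤) :
    F6expr (ν₁ + ν₂) ε b ≤
      ENNReal.ofReal (Real.exp (ε * (momentMinOne ν₂).toReal)) *
        (F6expr ν₁ ε b + ENNReal.ofReal (Real.exp (ε * (firstMomentAbove ν₁ b).toReal) * b) *
          momentMinOne ν₂) := by
  set C := momentMinOne ν₂
  set u := (firstMomentAbove ν₁ b).toReal
  have hI : (firstMomentAbove (ν₁ + ν₂) b).toReal ≤ u + C.toReal := by
    rw [firstMomentAbove_add]
    exact ENNReal.toReal_add_le.trans (add_le_add_right
      (ENNReal.toReal_mono hC (firstMomentAbove_le_momentMinOne hb₀)) u)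
  have hexp : ENNReal.ofReal (Real.exp (ε * (firstMomentAbove (ν₁ + ν₂) b).toReal)) ≤
      ENNReal.ofReal (Real.exp (ε * C.toReal)) * ENNReal.ofReal (Real.exp (ε * u)) := by
    rw [← ENNReal.ofReal_mul (Real.exp_pos _).le, ← Real.exp_add]
    gcongr
    linarith [mul_le_mul_of_nonneg_left hI hε]
  calc F6expr (ν₁ + ν₂) ε b
      ≤ ENNReal.ofReal (Real.exp (ε * C.toReal)) * ENNReal.ofReal (Real.exp (ε * u)) *
          (secondMomentBelow ν₁ b + ENNReal.ofReal b * C) := by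
        rw [F6expr_eq, secondMomentBelow_add]
        gcongr
        exact secondMomentBelow_le_mul_momentMinOne hb₀ hb₁
    _ = _ := by
        rw [F6expr_eq, ENNReal.ofReal_mul (Real.exp_pos _).le]
        ring

lemma liminf_nhdsGT_eq_zero_iff {f : ℝ → ENNReal} {x : ℝ} :
    liminf f (nhdsWithin x (Ioi x)) = 0 ↔
      ∀ δ > (0 : ℝ), ∀ r > x, ∃ b ∈ Ioo x r, f b ≤ ENNReal.ofReal δ := by
  refine ⟨fun h δ hδ r hr => ?_, fun h => ?_⟩
  · have hlt : ∃ᶠ b in nhdsWithin x (Ioi x), f b < ENNReal.ofReal δ :=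
      frequently_lt_of_liminf_lt (by isBoundedDefault) (by rw [h]; exact ENNReal.ofReal_pos.mpr hδ)
    obtain ⟨b, hb, hfb⟩ := (nhdsGT_basis x).frequently_iff.mp hlt r hr
    exact ⟨b, hb, hfb.le⟩
  · refine le_antisymm (le_of_forall_gt_imp_ge_of_dense fun c hc => ?_) zero_le
    obtain ⟨δ, -, hδ, hδc⟩ := ENNReal.lt_iff_exists_real_btwn.mp hc
    refine (liminf_le_of_frequently_le ?_ (by isBoundedDefault)).trans hδc.le
    exact (nhdsGT_basis x).frequently_iff.mpr fun r hr => h δ (ENNReal.ofReal_pos.mp hδ) r hr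

lemma toReal_firstMomentAbove_min_le {ν : Measure ℝ} {ε η a : ℝ} (hη : 0 < η) (ha₁ : a ≤ 1)
    (hJ : secondMomentBelow ν a ≠ ⊤)
    (hEJ : Real.exp (ε * (firstMomentAbove ν a).toReal) * (secondMomentBelow ν a).toReal ≤ η) :
    (firstMomentAbove ν (min a (η * Real.exp (-(ε * (firstMomentAbove ν a).toReal))))).toReal ≤
      (firstMomentAbove ν a).toReal + 1 := by
  set u := (firstMomentAbove ν a).toReal
  rcases min_choice a (η * Real.exp (-(ε * u))) with hb | hb <;> rw [hb]
  · linarith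
  · have hb₀ : 0 < η * Real.exp (-(ε * u)) := by positivity
    have hJb : (secondMomentBelow ν a).toReal / (η * Real.exp (-(ε * u))) ≤ 1 := by
      rwa [div_le_one hb₀, Real.exp_neg, ← div_eq_mul_inv, le_div_iff₀ (Real.exp_pos _),
        mul_comm]
    linarith [toReal_firstMomentAbove_le hb₀ (hb ▸ min_le_left _ _) ha₁ hJ]

lemma F6with.exists_F6expr_le_and_exp_mul_le {ν : Measure ℝ} {ε : ℝ} (hν : F6with ν ε)
    (hε : 0 ≤ ε) {δ r : ℝ} (hδ : 0 < δ) (hr : 0 < r) :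
    ∃ b ∈ Ioo 0 r, F6expr ν ε b ≤ ENNReal.ofReal δ ∧
      Real.exp (ε * (firstMomentAbove ν b).toReal) * b ≤ δ := by
  set η := δ * Real.exp (-ε)
  have hη : 0 < η := by positivity
  have hδη : Real.exp ε * η = δ := by
    rw [mul_left_comm, ← Real.exp_add, add_neg_cancel, Real.exp_zero, mul_one]
  obtain ⟨a, ⟨ha₀, ha⟩, hFa⟩ :=
    liminf_nhdsGT_eq_zero_iff.mp hν η hη (min r 1) (lt_min hr one_pos)
  have ha₁ : a ≤ 1 := ha.le.trans (min_le_right _ _)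
  set u := (firstMomentAbove ν a).toReal
  have hJ : secondMomentBelow ν a ≠ ⊤ := by
    rintro hJ
    rw [F6expr_eq, hJ, ENNReal.mul_top (by simp [Real.exp_pos])] at hFa
    exact ENNReal.ofReal_ne_top (top_le_iff.mp hFa)
  have hEJ : Real.exp (ε * u) * (secondMomentBelow ν a).toReal ≤ η := by
    rwa [F6expr_eq, ← ENNReal.ofReal_toReal hJ, ← ENNReal.ofReal_mul (Real.exp_pos _).le,
      ENNReal.ofReal_le_ofReal_iff hη.le] at hFa
  set b := min a (η * Real.exp (-(ε * u)))
  have hb₀ : 0 < b := lt_min ha₀ (by positivity)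
  have hba : b ≤ a := min_le_left _ _
  have hEb : Real.exp (ε * u) * b ≤ η := by
    calc Real.exp (ε * u) * b ≤ Real.exp (ε * u) * (η * Real.exp (-(ε * u))) := by
          gcongr; exact min_le_right _ _
      _ = η := by rw [mul_left_comm, ← Real.exp_add, add_neg_cancel, Real.exp_zero, mul_one]
  have hexp : Real.exp (ε * (firstMomentAbove ν b).toReal) ≤ Real.exp ε * Real.exp (ε * u) := by
    rw [← Real.exp_add]
    gcongr
    linarith [mul_le_mul_of_nonneg_left (toReal_firstMomentAbove_min_le hη ha₁ hJ hEJ) hε]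
  refine ⟨b, ⟨hb₀, hba.trans_lt (ha.trans_le (min_le_left _ _))⟩, ?_, ?_⟩
  · calc F6expr ν ε b
        ≤ ENNReal.ofReal (Real.exp ε) * F6expr ν ε a := by
          rw [F6expr_eq, F6expr_eq, ← mul_assoc, ← ENNReal.ofReal_mul (Real.exp_pos _).le]
          gcongr
          exact secondMomentBelow_mono ν hba
      _ ≤ ENNReal.ofReal (Real.exp ε) * ENNReal.ofReal η := by gcongr
      _ = ENNReal.ofReal δ := by rw [← ENNReal.ofReal_mul (Real.exp_pos _).le, hδη]
  · calc Real.exp (ε * (firstMomentAbove ν b).toReal) * b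
        ≤ Real.exp ε * (Real.exp (ε * u) * b) := by rw [← mul_assoc]; gcongr
      _ ≤ Real.exp ε * η := by gcongr
      _ = δ := hδη

theorem stmt_13 (lam₁ lam₂ : Measure ℝ) (hF6 : F6 lam₁)
    (hlam₂ : ∫⁻ z in Ioi (0 : ℝ), ENNReal.ofReal (min z 1) ∂lam₂ < ⊤) :
    F6 (lam₁ + lam₂) := by
  obtain ⟨ε, hε, h₁⟩ := hF6
  refine ⟨ε, hε, liminf_nhdsGT_eq_zero_iff.mpr fun δ hδ r hr => ?_⟩
  have hC : momentMinOne lam₂ ≠ ⊤ := hlam₂.ne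
  set C := momentMinOne lam₂
  set K := Real.exp (ε * C.toReal) * (1 + C.toReal)
  have hK : 0 < K := by positivity
  obtain ⟨b, ⟨hb₀, hbr⟩, hF, hE⟩ :=
    h₁.exists_F6expr_le_and_exp_mul_le hε.le (div_pos hδ hK) (lt_min hr one_pos)
  refine ⟨b, ⟨hb₀, hbr.trans_le (min_le_left _ _)⟩, ?_⟩
  calc F6expr (lam₁ + lam₂) ε b
      ≤ ENNReal.ofReal (Real.exp (ε * C.toReal)) *
          (ENNReal.ofReal (δ / K) + ENNReal.ofReal (δ / K) * ENNReal.ofReal C.toReal) := by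
        grw [F6expr_add_le lam₁ lam₂ hε.le hb₀.le (hbr.le.trans (min_le_right _ _)) hC, hF,
          ENNReal.ofReal_le_ofReal hE, ENNReal.ofReal_toReal hC]
    _ = ENNReal.ofReal δ := by
        rw [← ENNReal.ofReal_mul (by positivity), ← ENNReal.ofReal_add (by positivity)
          (by positivity), ← ENNReal.ofReal_mul (Real.exp_pos _).le]
        congr 1
        field_simp
        ring
end

section
/- The measure λ(dz) = (-log z)/z² dz on (0, 1/2] does not satisfy condition (F6): for every ε₀ > 0, liminf_{a↓0} exp(ε₀ ∫_{(a,1/2]} z dλ(z)) ∫_{(0,a]} z² dλ(z) > 0 (in fact the expression tends to infinity as a ↓ 0). -/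
/-!
Write `t = -log a`. The first integral equals `(t² - (log 2)²)/2`, so the exponential factor
grows like `exp (ε₀ t² / 2)`, while `-log z ≥ log 2` on `(0, 1/2]` bounds the second integral
below by `a log 2 = e^{-t} log 2`. Once `ε₀ (t² - (log 2)²)/2 ≥ t`, which holds for
`t ≥ log 2 + 2/ε₀`, the product is at least `log 2`.
-/

open MeasureTheory Set Filter

open Real Topology

theorem continuousOn_neg_log_div_self : ContinuousOn (fun z => -log z / z) {0}ᶜ :=
  continuousOn_log.neg.div continuousOn_id fun _ hx => hx

theorem integral_neg_log_div_self {a b : ℝ} (ha : 0 < a) (hab : a ≤ b) :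
    ∫ z in a..b, -log z / z = ((log a) ^ 2 - (log b) ^ 2) / 2 := by
  have hderiv : ∀ x ∈ uIcc a b, HasDerivAt (fun z => -(log z) ^ 2 / 2) (-log x / x) x := by
    intro x hx
    rw [uIcc_of_le hab] at hx
    have hx0 : 0 < x := ha.trans_le hx.1
    refine (((hasDerivAt_log hx0.ne').pow 2).neg.div_const 2).congr_deriv ?_
    field_simp
    norm_num
  have hcont : ContinuousOn (fun z => -log z / z) (uIcc a b) :=
    continuousOn_neg_log_div_self.mono fun x hx => (ha.trans_le (uIcc_of_le hab ▸ hx).1).ne'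
  rw [intervalIntegral.integral_eq_sub_of_hasDerivAt hderiv hcont.intervalIntegrable]
  ring

theorem lintegral_ofReal_neg_log_div_self {a b : ℝ} (ha : 0 < a) (hab : a ≤ b) (hb : b ≤ 1) :
    ∫⁻ z in Ioc a b, ENNReal.ofReal (-log z / z) =
      ENNReal.ofReal (((log a) ^ 2 - (log b) ^ 2) / 2) := by
  rw [← integral_neg_log_div_self ha hab, intervalIntegral.integral_of_le hab]
  refine (ofReal_integral_eq_lintegral_ofReal ?_ ?_).symm
  · exact (continuousOn_neg_log_div_self.mono fun x hx => (ha.trans_le hx.1).ne').integrableOn_Icc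
      |>.mono_set Ioc_subset_Icc_self
  · filter_upwards [ae_restrict_mem measurableSet_Ioc] with z ⟨haz, hzb⟩
    have hz : 0 < z := ha.trans haz
    exact div_nonneg (neg_nonneg.2 (log_nonpos hz.le (hzb.trans hb))) hz.le

noncomputable def negLogMeasure : Measure ℝ :=
  (volume.restrict (Ioc (0 : ℝ) (1 / 2))).withDensity fun z => ENNReal.ofReal (-log z / z ^ 2)

theorem setLIntegral_negLogMeasure {g : ℝ → ℝ} (hg : Measurable g) {s : Set ℝ}
    (hs : MeasurableSet s) (hg₀ : ∀ z ∈ s ∩ Ioc 0 (1 / 2), 0 ≤ g z) :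
    ∫⁻ z in s, ENNReal.ofReal (g z) ∂negLogMeasure =
      ∫⁻ z in s ∩ Ioc 0 (1 / 2), ENNReal.ofReal (-log z / z ^ 2 * g z) := by
  rw [negLogMeasure, setLIntegral_withDensity_eq_setLIntegral_mul _
    (f := fun z => ENNReal.ofReal (-log z / z ^ 2))
    (measurable_log.neg.div (measurable_id.pow_const 2)).ennreal_ofReal hg.ennreal_ofReal hs,
    Measure.restrict_restrict hs]
  exact setLIntegral_congr_fun (hs.inter measurableSet_Ioc) fun z hz =>
    (ENNReal.ofReal_mul' (hg₀ z hz)).symm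

theorem setLIntegral_Ioc_id_negLogMeasure {a : ℝ} (ha : 0 < a) (ha' : a ≤ 1 / 2) :
    ∫⁻ z in Ioc a 1, ENNReal.ofReal z ∂negLogMeasure =
      ENNReal.ofReal (((log a) ^ 2 - (log 2) ^ 2) / 2) := by
  rw [setLIntegral_negLogMeasure (g := fun z => z) measurable_id measurableSet_Ioc
    fun z hz => ha.le.trans hz.1.1.le, Ioc_inter_Ioc, max_eq_left ha.le, min_eq_right (by norm_num)]
  have hlog : log (1 / 2 : ℝ) ^ 2 = log 2 ^ 2 := by rw [one_div, log_inv, neg_sq]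
  rw [← hlog, ← lintegral_ofReal_neg_log_div_self ha ha' (by norm_num)]
  refine setLIntegral_congr_fun measurableSet_Ioc fun z hz => ?_
  have hz : z ≠ 0 := (ha.trans hz.1).ne'
  field_simp

theorem ofReal_mul_log_two_le_setLIntegral_sq_negLogMeasure {a : ℝ} (ha : a ≤ 1 / 2) :
    ENNReal.ofReal (a * log 2) ≤ ∫⁻ z in Ioc 0 a, ENNReal.ofReal (z ^ 2) ∂negLogMeasure := by
  rw [setLIntegral_negLogMeasure (g := fun z => z ^ 2) (measurable_id.pow_const 2)
    measurableSet_Ioc fun z _ => sq_nonneg z, Ioc_inter_Ioc, max_self, min_eq_left ha]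
  calc ENNReal.ofReal (a * log 2) = ∫⁻ _ in Ioc 0 a, ENNReal.ofReal (log 2) := by
        rw [setLIntegral_const, Real.volume_Ioc, sub_zero, mul_comm,
          ENNReal.ofReal_mul (log_nonneg one_le_two)]
    _ ≤ _ := by
      refine setLIntegral_mono' measurableSet_Ioc fun z ⟨hz, hza⟩ => ENNReal.ofReal_le_ofReal ?_
      rw [div_mul_cancel₀ _ (pow_ne_zero 2 hz.ne'), le_neg, ← log_inv]
      exact log_le_log hz (by linarith)

theorem eventually_neg_log_le (ε₀ : ℝ) (hε : 0 < ε₀) :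
    ∀ᶠ a in 𝓝[>] 0, -log a ≤ ε₀ * (((log a) ^ 2 - (log 2) ^ 2) / 2) := by
  filter_upwards [tendsto_log_nhdsGT_zero.eventually (eventually_le_atBot (-(log 2 + 2 / ε₀)))]
    with a ha
  have h2 : 0 < log 2 := log_pos one_lt_two
  have hc : ε₀ * (2 / ε₀) = 2 := by field_simp
  have hc₀ : 0 < 2 / ε₀ := by positivity
  nlinarith [mul_nonneg hε.le (mul_nonneg (by linarith : 0 ≤ -log a - log 2 - 2 / ε₀)
    (by linarith : 0 ≤ -log a + log 2))]

/-- The measure with density `(-log z)/z²` on `(0,1/2]` does not satisfy (F6):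
for every `ε₀ > 0` the liminf is strictly positive. (Since the measure is
supported in `(0,1/2]`, integrating `z` over `(a,1]` is the same as over `(a,1/2]`.) -/
theorem stmt_16 :
    ∀ ε₀ > (0 : ℝ),
      0 < liminf
        (fun a : ℝ =>
          F6expr ((volume.restrict (Ioc (0 : ℝ) (1 / 2))).withDensity
            (fun z => ENNReal.ofReal (-Real.log z / z ^ 2))) ε₀ a)
        (nhdsWithin 0 (Ioi 0)) := by
  intro ε₀ hε
  change 0 < liminf (fun a => F6expr negLogMeasure ε₀ a) (𝓝[>] 0)
  refine (ENNReal.ofReal_pos.2 (log_pos one_lt_two)).trans_le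
    (le_liminf_of_le (by isBoundedDefault) ?_)
  filter_upwards [eventually_neg_log_le ε₀ hε, Ioo_mem_nhdsGT (by norm_num : (0 : ℝ) < 1 / 2)]
    with a hexp ⟨ha, ha'⟩
  have hloga : 0 < -log a := neg_pos.2 (log_neg ha (by linarith))
  rw [F6expr, setLIntegral_Ioc_id_negLogMeasure ha ha'.le,
    ENNReal.toReal_ofReal ((mul_nonneg_iff_of_pos_left hε).1 (hloga.le.trans hexp))]
  have hexpa : 1 ≤ exp (ε₀ * (((log a) ^ 2 - (log 2) ^ 2) / 2)) * a := by
    calc (1 : ℝ) = exp (-log a) * a := by rw [exp_neg, exp_log ha, inv_mul_cancel₀ ha.ne']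
      _ ≤ _ := by gcongr
  calc ENNReal.ofReal (log 2)
      ≤ ENNReal.ofReal (exp (ε₀ * (((log a) ^ 2 - (log 2) ^ 2) / 2)) * (a * log 2)) := by
        rw [← mul_assoc]
        exact ENNReal.ofReal_le_ofReal (le_mul_of_one_le_left (log_nonneg one_le_two) hexpa)
    _ ≤ _ := by
      rw [ENNReal.ofReal_mul (exp_nonneg _)]
      gcongr
      exact ofReal_mul_log_two_le_setLIntegral_sq_negLogMeasure ha'.le
end
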